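/- Let D be a finite simple matroid of rank at most 3, A, B ⊆ D disjoint, and δ(A/B) := δ(A∪B) - δ(B) with δ(X) = |X| - Σ_{ℓ line of X}(|ℓ|-2). If a point p ∈ A is incident with exactly one line based in B and |A| = 1, then δ(A/B) = 0; if p is incident with no line based in B and |A| = 1, then δ(A/B) = 1; and if p is incident with at least two distinct lines based in B, then δ(A/B) < 0. -/
import Mathlib


open scoped Classical

/-- A simple matroid of rank ≤ 3 presented as a 3-hypergraph `(V, R)`:
`R` is irreflexive, symmetric, and satisfies the exchange axiom
(if `R a b c` and `R a b d` then `{a,b,c,d}` is an `R`-clique). -/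
structure PlaneGeom (V : Type) where
  R : V → V → V → Prop
  irrefl : ∀ a b c, R a b c → a ≠ b ∧ b ≠ c ∧ a ≠ c
  symm₁ : ∀ a b c, R a b c → R b a c
  symm₂ : ∀ a b c, R a b c → R a c b
  exchange : ∀ a b c d, R a b c → R a b d → c ≠ d → R a c d

/-- A line `ℓ` is based in `B` if it contains at least two points of `B`. -/
def BasedIn {V : Type} [DecidableEq V] (ℓ B : Finset V) : Prop := 2 ≤ (ℓ ∩ B).card

namespace PlaneGeom

variable {V : Type} [Fintype V] [DecidableEq V] (G : PlaneGeom V)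

/-- A set of pairwise collinear points. -/
def IsClique (s : Finset V) : Prop :=
  ∀ a ∈ s, ∀ b ∈ s, ∀ c ∈ s, a ≠ b → b ≠ c → a ≠ c → G.R a b c

/-- A (nontrivial) line of the submatroid induced on `X`: a maximal
`R`-clique in `X` of size at least 3. -/
def IsLine (X ℓ : Finset V) : Prop :=
  ℓ ⊆ X ∧ 3 ≤ ℓ.card ∧ G.IsClique ℓ ∧
    ∀ p ∈ X, p ∉ ℓ → ¬ G.IsClique (insert p ℓ)

/-- The set of nontrivial lines of the submatroid induced on `X`. -/
noncomputable def lines (X : Finset V) : Finset (Finset V) :=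
  Finset.univ.filter (fun ℓ => G.IsLine X ℓ)

/-- The predimension function `δ(X) = |X| - Σ_{ℓ ∈ L(X)} (|ℓ| - 2)`. -/
noncomputable def delta (X : Finset V) : ℤ :=
  (X.card : ℤ) - ∑ ℓ ∈ G.lines X, ((ℓ.card : ℤ) - 2)

/-- `A ≤ B` : `A` is a strong substructure of `B`. -/
def Strong (A B : Finset V) : Prop :=
  A ⊆ B ∧ ∀ X : Finset V, A ⊆ X → X ⊆ B → G.delta A ≤ G.delta X

/-- Membership in the class `K₀`: hereditarily nonnegative `δ`. -/
def InK0 (A : Finset V) : Prop := ∀ A' ⊆ A, 0 ≤ G.delta A'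

/-- `B` is a primitive strong extension of `A`. -/
def Primitive (A B : Finset V) : Prop :=
  G.Strong A B ∧ A ≠ B ∧
    ∀ B₀ : Finset V, A ⊆ B₀ → B₀ ⊆ B → G.Strong A B₀ → G.Strong B₀ B →
      B₀ = A ∨ B₀ = B

end PlaneGeom

namespace PlaneGeom

variable {V : Type} [Fintype V] [DecidableEq V] {G : PlaneGeom V}

lemma clique_mono {s t : Finset V} (h : s ⊆ t) (ht : G.IsClique t) : G.IsClique s :=
  fun a ha b hb c hc => ht a (h ha) b (h hb) c (h hc)

lemma mem_lines {X ℓ : Finset V} : ℓ ∈ G.lines X ↔ G.IsLine X ℓ := by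
  simp [lines]

lemma clique_insert_of {m : Finset V} {q : V} (hm : G.IsClique m)
    (h : ∀ x ∈ m, ∀ y ∈ m, x ≠ y → q ≠ x → q ≠ y → G.R q x y) :
    G.IsClique (insert q m) := by
  intro a ha b hb c hc hab hbc hac
  simp only [Finset.mem_insert] at ha hb hc
  rcases ha with rfl | ha
  · rcases hb with rfl | hb
    · exact absurd rfl hab
    · rcases hc with rfl | hc
      · exact absurd rfl hac
      · exact h b hb c hc hbc hab hac
  · rcases hb with rfl | hb
    · rcases hc with rfl | hc
      · exact absurd rfl hbc
      · exact G.symm₁ _ _ _ (h a ha c hc hac hab.symm hbc)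
    · rcases hc with rfl | hc
      · exact G.symm₂ _ _ _ (G.symm₁ _ _ _ (h a ha b hb hab hac.symm hbc.symm))
      · exact hm a ha b hb c hc hab hbc hac

lemma insert_clique_of_erase {m : Finset V} {p q : V}
    (hm : G.IsClique m) (hpm : p ∈ m) (hqm : q ∉ m) (hqp : q ≠ p)
    (hcard : 2 ≤ (m.erase p).card)
    (hc : G.IsClique (insert q (m.erase p))) :
    G.IsClique (insert q m) := by
  have key : ∀ y ∈ m, y ≠ p → G.R q p y := by
    intro y hy hyp
    have hy' : y ∈ m.erase p := Finset.mem_erase.mpr ⟨hyp, hy⟩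
    obtain ⟨a, ha, hay⟩ := Finset.exists_mem_ne (s := m.erase p) (by omega) y
    have hap : a ≠ p := (Finset.mem_erase.mp ha).1
    have ham : a ∈ m := (Finset.mem_erase.mp ha).2
    have haq : a ≠ q := fun h => hqm (h ▸ ham)
    have hyq : y ≠ q := fun h => hqm (h ▸ hy)
    have h1 : G.R y a p := hm y hy a ham p hpm (Ne.symm hay) hap hyp
    have h2 : G.R y a q := hc y (Finset.mem_insert_of_mem hy') a
      (Finset.mem_insert_of_mem ha) q (Finset.mem_insert_self _ _) (Ne.symm hay) haq hyq
    have h3 : G.R y p q := G.exchange y a p q h1 h2 (Ne.symm hqp)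
    exact G.symm₁ _ _ _ (G.symm₂ _ _ _ (G.symm₁ _ _ _ h3))
  apply clique_insert_of hm
  intro x hx y hy hxy hqx hqy
  by_cases hxp : x = p
  · subst hxp
    exact key y hy hxy.symm
  · by_cases hyp : y = p
    · subst hyp
      exact G.symm₂ _ _ _ (key x hx hxp)
    · exact hc q (Finset.mem_insert_self _ _) x
        (Finset.mem_insert_of_mem (Finset.mem_erase.mpr ⟨hxp, hx⟩)) y
        (Finset.mem_insert_of_mem (Finset.mem_erase.mpr ⟨hyp, hy⟩)) hqx hxy hqy

lemma line_of_insert_line {B : Finset V} {p : V} (hp : p ∉ B) {ℓ : Finset V}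
    (hℓ : G.IsLine B ℓ) (hc : G.IsClique (insert p ℓ)) :
    G.IsLine (insert p B) (insert p ℓ) := by
  obtain ⟨hsub, hcard, hcl, hmax⟩ := hℓ
  have hpℓ : p ∉ ℓ := fun h => hp (hsub h)
  refine ⟨Finset.insert_subset_insert _ hsub, ?_, hc, ?_⟩
  · rw [Finset.card_insert_of_notMem hpℓ]; omega
  · intro q hq hq' hq''
    have hqp : q ≠ p := fun h => hq' (h ▸ Finset.mem_insert_self _ _)
    have hqB : q ∈ B := (Finset.mem_insert.mp hq).resolve_left hqp
    have hqℓ : q ∉ ℓ := fun h => hq' (Finset.mem_insert_of_mem h)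
    exact hmax q hqB hqℓ (clique_mono
      (Finset.insert_subset_insert q (Finset.subset_insert p ℓ)) hq'')

lemma erase_line {B : Finset V} {p : V} (hp : p ∉ B) {m : Finset V}
    (hm : G.IsLine (insert p B) m) (hpm : p ∈ m) (h4 : 4 ≤ m.card) :
    G.IsLine B (m.erase p) := by
  obtain ⟨hsub, hcard, hcl, hmax⟩ := hm
  have hecard : 3 ≤ (m.erase p).card := by rw [Finset.card_erase_of_mem hpm]; omega
  refine ⟨?_, hecard, clique_mono (Finset.erase_subset _ _) hcl, ?_⟩
  · intro x hx
    rcases Finset.mem_insert.mp (hsub (Finset.mem_erase.mp hx).2) with h | h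
    · exact absurd h (Finset.mem_erase.mp hx).1
    · exact h
  · intro q hqB hq hq'
    have hqp : q ≠ p := fun h => hp (h ▸ hqB)
    have hqm : q ∉ m := fun h => hq (Finset.mem_erase.mpr ⟨hqp, h⟩)
    exact hmax q (Finset.mem_insert_of_mem hqB) hqm
      (insert_clique_of_erase hcl hpm hqm hqp (by omega) hq')

lemma delta_step {B : Finset V} {p : V} (hp : p ∉ B) :
    G.delta (insert p B) - G.delta B =
      1 - (((G.lines (insert p B)).filter (fun ℓ => p ∈ ℓ)).card : ℤ) := by
  classical
  have hQ : (G.lines B).filter (fun ℓ => ¬ G.IsClique (insert p ℓ)) =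
      (G.lines (insert p B)).filter (fun ℓ => p ∉ ℓ) := by
    ext ℓ
    simp only [Finset.mem_filter, mem_lines]
    constructor
    · rintro ⟨⟨hsub, hcard, hcl, hmax⟩, hnc⟩
      have hpℓ : p ∉ ℓ := fun h => hp (hsub h)
      refine ⟨⟨hsub.trans (Finset.subset_insert _ _), hcard, hcl, ?_⟩, hpℓ⟩
      intro q hq hq'
      rcases Finset.mem_insert.mp hq with rfl | hqB
      · exact hnc
      · exact hmax q hqB hq'
    · rintro ⟨⟨hsub, hcard, hcl, hmax⟩, hpℓ⟩
      have hsubB : ℓ ⊆ B := fun x hx =>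
        (Finset.mem_insert.mp (hsub hx)).resolve_left (fun h => hpℓ (h ▸ hx))
      exact ⟨⟨hsubB, hcard, hcl, fun q hq => hmax q (Finset.mem_insert_of_mem hq)⟩,
        hmax p (Finset.mem_insert_self _ _) hpℓ⟩
  have h1 : ∑ ℓ ∈ (G.lines B).filter (fun ℓ => G.IsClique (insert p ℓ)),
      ((ℓ.card : ℤ) - 2) =
      ∑ m ∈ ((G.lines (insert p B)).filter (fun ℓ => p ∈ ℓ)).filter
        (fun m => 4 ≤ m.card), ((m.card : ℤ) - 3) := by
    apply Finset.sum_nbij' (i := fun ℓ => insert p ℓ) (j := fun m => m.erase p)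
    · intro ℓ hℓ
      simp only [Finset.mem_filter, mem_lines] at hℓ ⊢
      have hpℓ : p ∉ ℓ := fun h => hp (hℓ.1.1 h)
      refine ⟨⟨line_of_insert_line hp hℓ.1 hℓ.2, Finset.mem_insert_self _ _⟩, ?_⟩
      rw [Finset.card_insert_of_notMem hpℓ]
      have := hℓ.1.2.1
      omega
    · intro m hm
      simp only [Finset.mem_filter, mem_lines] at hm ⊢
      refine ⟨erase_line hp hm.1.1 hm.1.2 hm.2, ?_⟩
      rw [Finset.insert_erase hm.1.2]
      exact hm.1.1.2.2.1
    · intro ℓ hℓ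
      simp only [Finset.mem_filter, mem_lines] at hℓ
      exact Finset.erase_insert (fun h => hp (hℓ.1.1 h))
    · intro m hm
      simp only [Finset.mem_filter, mem_lines] at hm
      exact Finset.insert_erase hm.1.2
    · intro ℓ hℓ
      simp only [Finset.mem_filter, mem_lines] at hℓ
      rw [Finset.card_insert_of_notMem (fun h => hp (hℓ.1.1 h))]
      push_cast
      ring
  have h2 : ∑ m ∈ ((G.lines (insert p B)).filter (fun ℓ => p ∈ ℓ)).filter
        (fun m => 4 ≤ m.card), ((m.card : ℤ) - 3) =
      ∑ m ∈ (G.lines (insert p B)).filter (fun ℓ => p ∈ ℓ), ((m.card : ℤ) - 3) := by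
    apply Finset.sum_subset (Finset.filter_subset _ _)
    intro m hm hnm
    have h3 : 3 ≤ m.card := (mem_lines.mp (Finset.mem_filter.mp hm).1).2.1
    have h4 : ¬ 4 ≤ m.card := by
      intro h
      exact hnm (Finset.mem_filter.mpr ⟨hm, h⟩)
    have : m.card = 3 := by omega
    rw [this]
    norm_num
  have splitX : ∑ ℓ ∈ G.lines (insert p B), ((ℓ.card : ℤ) - 2) =
      (∑ ℓ ∈ (G.lines (insert p B)).filter (fun ℓ => p ∈ ℓ), ((ℓ.card : ℤ) - 2)) +
      ∑ ℓ ∈ (G.lines (insert p B)).filter (fun ℓ => p ∉ ℓ), ((ℓ.card : ℤ) - 2) :=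
    (Finset.sum_filter_add_sum_filter_not _ _ _).symm
  have splitB : ∑ ℓ ∈ G.lines B, ((ℓ.card : ℤ) - 2) =
      (∑ ℓ ∈ (G.lines B).filter (fun ℓ => G.IsClique (insert p ℓ)), ((ℓ.card : ℤ) - 2)) +
      ∑ ℓ ∈ (G.lines B).filter (fun ℓ => ¬ G.IsClique (insert p ℓ)), ((ℓ.card : ℤ) - 2) :=
    (Finset.sum_filter_add_sum_filter_not _ _ _).symm
  have hsum : ∑ m ∈ (G.lines (insert p B)).filter (fun ℓ => p ∈ ℓ), ((m.card : ℤ) - 2) -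
      ∑ m ∈ (G.lines (insert p B)).filter (fun ℓ => p ∈ ℓ), ((m.card : ℤ) - 3) =
      (((G.lines (insert p B)).filter (fun ℓ => p ∈ ℓ)).card : ℤ) := by
    rw [← Finset.sum_sub_distrib]
    simp
  have hc : ((insert p B).card : ℤ) = (B.card : ℤ) + 1 := by
    rw [Finset.card_insert_of_notMem hp]
    push_cast
    ring
  unfold delta
  rw [splitX, splitB, hQ, h1, h2, hc]
  linarith [hsum]

end PlaneGeom

/-- the one-point case analysis for `δ(A/B)` with `A = {p}`. -/
theorem stmt_19 {V : Type} [Fintype V] [DecidableEq V] (G : PlaneGeom V)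
    (B : Finset V) (p : V) (hp : p ∉ B) :
    ((∃! ℓ : Finset V, G.IsLine (insert p B) ℓ ∧ BasedIn ℓ B ∧ p ∈ ℓ) →
        G.delta (insert p B) - G.delta B = 0) ∧
    ((¬ ∃ ℓ : Finset V, G.IsLine (insert p B) ℓ ∧ BasedIn ℓ B ∧ p ∈ ℓ) →
        G.delta (insert p B) - G.delta B = 1) ∧
    ((∃ ℓ₁ ℓ₂ : Finset V, ℓ₁ ≠ ℓ₂ ∧
        (G.IsLine (insert p B) ℓ₁ ∧ BasedIn ℓ₁ B ∧ p ∈ ℓ₁) ∧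
        (G.IsLine (insert p B) ℓ₂ ∧ BasedIn ℓ₂ B ∧ p ∈ ℓ₂)) →
        G.delta (insert p B) - G.delta B < 0) := by
  classical
  have hiff : ∀ ℓ : Finset V,
      (G.IsLine (insert p B) ℓ ∧ BasedIn ℓ B ∧ p ∈ ℓ) ↔
        ℓ ∈ (G.lines (insert p B)).filter (fun ℓ => p ∈ ℓ) := by
    intro ℓ
    simp only [Finset.mem_filter, PlaneGeom.mem_lines]
    constructor
    · rintro ⟨h1, _, h3⟩
      exact ⟨h1, h3⟩
    · rintro ⟨h1, h3⟩
      refine ⟨h1, ?_, h3⟩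
      have hsub : ℓ.erase p ⊆ ℓ ∩ B := by
        intro x hx
        obtain ⟨hxp, hxl⟩ := Finset.mem_erase.mp hx
        refine Finset.mem_inter.mpr ⟨hxl, ?_⟩
        rcases Finset.mem_insert.mp (h1.1 hxl) with h | h
        · exact absurd h hxp
        · exact h
      have hle := Finset.card_le_card hsub
      have hce : (ℓ.erase p).card = ℓ.card - 1 := Finset.card_erase_of_mem h3
      have h3c := h1.2.1
      unfold BasedIn
      omega
  have key := PlaneGeom.delta_step (G := G) hp
  refine ⟨?_, ?_, ?_⟩
  · rintro ⟨ℓ₀, hℓ₀, huniq⟩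
    have hK : (G.lines (insert p B)).filter (fun ℓ => p ∈ ℓ) = {ℓ₀} := by
      ext ℓ
      simp only [Finset.mem_singleton]
      constructor
      · intro h
        exact huniq ℓ ((hiff ℓ).mpr h)
      · rintro rfl
        exact (hiff _).mp hℓ₀
    rw [key, hK]
    simp
  · intro h
    have hK : (G.lines (insert p B)).filter (fun ℓ => p ∈ ℓ) = ∅ := by
      ext ℓ
      simp only [Finset.notMem_empty, iff_false]
      intro hl
      exact h ⟨ℓ, (hiff ℓ).mpr hl⟩
    rw [key, hK]
    simp
  · rintro ⟨ℓ₁, ℓ₂, hne, h1, h2⟩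
    have hsub : ({ℓ₁, ℓ₂} : Finset (Finset V)) ⊆
        (G.lines (insert p B)).filter (fun ℓ => p ∈ ℓ) := by
      intro ℓ hl
      rcases Finset.mem_insert.mp hl with rfl | hl
      · exact (hiff _).mp h1
      · rw [Finset.mem_singleton.mp hl]
        exact (hiff _).mp h2
    have h2le : 2 ≤ ((G.lines (insert p B)).filter (fun ℓ => p ∈ ℓ)).card := by
      have := Finset.card_le_card hsub
      rwa [Finset.card_pair hne] at this
    have h2le' : (2 : ℤ) ≤ (((G.lines (insert p B)).filter (fun ℓ => p ∈ ℓ)).card : ℤ) := by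
      exact_mod_cast h2le
    rw [key]
    linarith
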